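/- The infinite series ∑_{k=1}^∞ (2k)!·(3k+1)/(4k+1)!! converges to π/4. -/

import Mathlib

/-!
By the Beta integral and `(4k+1)! = (4k+1)‼ · 4^k (2k)!`, the `k`-th term (for every
`k ≥ 0`) equals `∫₀¹ (3k+1) q(x)^k dx` with `q(x) = (2x(1-x))² ∈ [0, 1/4]`. The terms are
dominated by `(3k+1) 4^(-k)`, so the arithmetico-geometric series may be summed under the
integral, giving `∫₀¹ 3q/(1-q)² + 1/(1-q) dx`. With `u = 2x - 1` one has
`1 - q = (1+u²)(3-u²)/4`, and partial fractions produce an explicit primitive with value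
`π/4 + 1`. The `k = 0` term is `1`.
-/

open Filter Finset Real MeasureTheory
open scoped Nat

theorem integral_pow_mul_one_sub_pow (m n : ℕ) :
    ∫ x in (0 : ℝ)..1, x ^ m * (1 - x) ^ n = (m ! * n ! / (m + n + 1)! : ℝ) := by
  have h := Complex.betaIntegral_eq_Gamma_mul_div (m + 1) (n + 1)
    (by simp; positivity) (by simp; positivity)
  rw [Complex.betaIntegral, show (m + 1 + (n + 1) : ℂ) = (m + n + 1 : ℕ) + 1 by push_cast; ring,
    Complex.Gamma_nat_eq_factorial, Complex.Gamma_nat_eq_factorial,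
    Complex.Gamma_nat_eq_factorial] at h
  simp only [add_sub_cancel_right, Complex.cpow_natCast] at h
  have h' : ((∫ x in (0 : ℝ)..1, x ^ m * (1 - x) ^ n : ℝ) : ℂ)
      = ((m ! * n ! / (m + n + 1)! : ℝ) : ℂ) := by
    rw [← intervalIntegral.integral_ofReal]; push_cast; exact h
  exact_mod_cast h'

theorem hasSum_linear_mul_geometric {r : ℝ} (hr : |r| < 1) (a b : ℝ) :
    HasSum (fun n : ℕ => (a * n + b) * r ^ n) (a * r / (1 - r) ^ 2 + b / (1 - r)) := by
  have hlin := (hasSum_coe_mul_geometric_of_norm_lt_one (by simpa using hr)).mul_left a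
  have hgeo := (hasSum_geometric_of_abs_lt_one hr).mul_left b
  rw [show a * r / (1 - r) ^ 2 + b / (1 - r) = a * (r / (1 - r) ^ 2) + b * (1 - r)⁻¹ by ring]
  refine (hlin.add hgeo).congr_fun fun n => ?_
  ring

theorem Nat.factorial_two_mul_add_one (n : ℕ) :
    (2 * n + 1)! = (2 * n + 1)‼ * (2 ^ n * n !) := by
  rw [Nat.factorial_eq_mul_doubleFactorial, Nat.doubleFactorial_two_mul]

namespace PiQuarterSeries

noncomputable def bump (x : ℝ) : ℝ := (2 * x * (1 - x)) ^ 2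

theorem bump_nonneg (x : ℝ) : 0 ≤ bump x := sq_nonneg _

theorem bump_le {x : ℝ} (hx : x ∈ Set.Icc (0 : ℝ) 1) : bump x ≤ 1 / 4 := by
  obtain ⟨h0, h1⟩ := hx
  have : 2 * x * (1 - x) ≤ 1 / 2 := by nlinarith [sq_nonneg (2 * x - 1)]
  unfold bump
  nlinarith [mul_nonneg h0 (sub_nonneg.2 h1)]

theorem one_sub_bump_pos {x : ℝ} (hx : x ∈ Set.Icc (0 : ℝ) 1) : 0 < 1 - bump x := by
  linarith [bump_le hx]

theorem integral_bump_pow (k : ℕ) :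
    ∫ x in (0 : ℝ)..1, bump x ^ k = ((2 * k)! / (4 * k + 1)‼ : ℝ) := by
  have hpow : ∀ x : ℝ, bump x ^ k = 4 ^ k * (x ^ (2 * k) * (1 - x) ^ (2 * k)) := fun x => by
    rw [bump, ← pow_mul, mul_pow, mul_pow, pow_mul (2 : ℝ)]; norm_num [mul_assoc]
  simp_rw [hpow, intervalIntegral.integral_const_mul, integral_pow_mul_one_sub_pow,
    show 2 * k + 2 * k + 1 = 2 * (2 * k) + 1 by ring, Nat.factorial_two_mul_add_one]
  rw [show 2 * (2 * k) + 1 = 4 * k + 1 by ring, pow_mul]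
  push_cast
  field_simp

theorem hasSum_bump_series {x : ℝ} (hx : x ∈ Set.Icc (0 : ℝ) 1) :
    HasSum (fun k : ℕ => (3 * k + 1) * bump x ^ k)
      (3 * bump x / (1 - bump x) ^ 2 + 1 / (1 - bump x)) :=
  hasSum_linear_mul_geometric
    (abs_lt.2 ⟨by linarith [bump_nonneg x], by linarith [bump_le hx]⟩) 3 1

theorem one_sub_bump (x : ℝ) :
    1 - bump x = (1 + (2 * x - 1) ^ 2) * (3 - (2 * x - 1) ^ 2) / 4 := by
  unfold bump; ring

noncomputable def primitive (x : ℝ) : ℝ :=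
  arctan (2 * x - 1) / 2 + (2 * x - 1) / (4 * (3 - (2 * x - 1) ^ 2))
    + 3 * (2 * x - 1) / (4 * (1 + (2 * x - 1) ^ 2))

theorem hasDerivAt_primitive {x : ℝ} (hx : (2 * x - 1) ^ 2 ≠ 3) :
    HasDerivAt primitive (3 * bump x / (1 - bump x) ^ 2 + 1 / (1 - bump x)) x := by
  have hu : HasDerivAt (fun x : ℝ => 2 * x - 1) 2 x := by
    simpa using ((hasDerivAt_id x).const_mul 2).sub_const 1
  have h3 : 3 - (2 * x - 1) ^ 2 ≠ 0 := sub_ne_zero.2 (Ne.symm hx)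
  have h1 : 1 + (2 * x - 1) ^ 2 ≠ 0 := by positivity
  have hd := ((hu.arctan.div_const 2).add
    (hu.div (((hu.pow 2).const_sub 3).const_mul 4) (mul_ne_zero four_ne_zero h3))).add
    ((hu.const_mul 3).div (((hu.pow 2).const_add 1).const_mul 4) (mul_ne_zero four_ne_zero h1))
  refine hd.congr_deriv ?_
  have hq := div_ne_zero (mul_ne_zero h1 h3) four_ne_zero
  have hb : bump x = 1 - (1 + (2 * x - 1) ^ 2) * (3 - (2 * x - 1) ^ 2) / 4 := by
    rw [← one_sub_bump]; ring
  simp only [Pi.pow_apply, hb]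
  generalize 2 * x - 1 = u at *
  field_simp
  ring

theorem integral_bump_series :
    ∫ x in (0 : ℝ)..1, (3 * bump x / (1 - bump x) ^ 2 + 1 / (1 - bump x)) = π / 4 + 1 := by
  have hI : Set.uIcc (0 : ℝ) 1 = Set.Icc 0 1 := Set.uIcc_of_le zero_le_one
  have hderiv : ∀ x ∈ Set.uIcc (0 : ℝ) 1,
      HasDerivAt primitive (3 * bump x / (1 - bump x) ^ 2 + 1 / (1 - bump x)) x := by
    rw [hI]
    rintro x ⟨h0, h1⟩
    exact hasDerivAt_primitive (by nlinarith)
  have hcont : ContinuousOn (fun x => 3 * bump x / (1 - bump x) ^ 2 + 1 / (1 - bump x))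
      (Set.uIcc 0 1) := by
    rw [hI]
    have hne : ∀ x ∈ Set.Icc (0 : ℝ) 1, 1 - bump x ≠ 0 := fun x hx =>
      (one_sub_bump_pos hx).ne'
    unfold bump at hne ⊢
    exact ContinuousOn.add (ContinuousOn.div (by fun_prop) (by fun_prop)
      fun x hx => pow_ne_zero 2 (hne x hx)) (ContinuousOn.div (by fun_prop) (by fun_prop) hne)
  rw [intervalIntegral.integral_eq_sub_of_hasDerivAt hderiv hcont.intervalIntegrable]
  norm_num [primitive, arctan_one, arctan_neg]
  ring

end PiQuarterSeries

open PiQuarterSeries in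
theorem hasSum_factorial_div_doubleFactorial :
    HasSum (fun k : ℕ => ((2 * k)! : ℝ) * (3 * k + 1) / (4 * k + 1)‼) (π / 4 + 1) := by
  have hterm : ∀ k : ℕ, ((2 * k)! : ℝ) * (3 * k + 1) / (4 * k + 1)‼
      = ∫ x in (0 : ℝ)..1, (3 * k + 1) * bump x ^ k := fun k => by
    rw [intervalIntegral.integral_const_mul, integral_bump_pow]; ring
  simp_rw [hterm, ← integral_bump_series]
  have hIoc {x : ℝ} (hx : x ∈ Set.uIoc (0 : ℝ) 1) : x ∈ Set.Icc (0 : ℝ) 1 :=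
    Set.Ioc_subset_Icc_self (by rwa [Set.uIoc_of_le zero_le_one] at hx)
  refine intervalIntegral.hasSum_integral_of_dominated_convergence
    (fun k _ => (3 * k + 1) * (1 / 4 : ℝ) ^ k)
    (fun k => (by unfold bump; fun_prop : Continuous _).aestronglyMeasurable)
    (fun k => ae_of_all _ fun x hx => ?_)
    (ae_of_all _ fun _ _ => (hasSum_linear_mul_geometric (by norm_num) 3 1).summable)
    intervalIntegrable_const
    (ae_of_all _ fun x hx => hasSum_bump_series (hIoc hx))
  rw [Real.norm_of_nonneg (by have := bump_nonneg x; positivity)]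
  gcongr
  · exact bump_nonneg x
  · exact bump_le (hIoc hx)

theorem stmt6 :
    Tendsto (fun N => ∑ k ∈ Ico 1 N,
      (Nat.factorial (2 * k) : ℝ) * (3 * (k : ℝ) + 1) /
        (Nat.doubleFactorial (4 * k + 1) : ℝ))
      atTop (nhds (Real.pi / 4)) := by
  have h := hasSum_factorial_div_doubleFactorial.tendsto_sum_nat.sub_const 1
  rw [add_sub_cancel_right] at h
  refine h.congr' ?_
  filter_upwards [eventually_ge_atTop 1] with N hN
  simp [sum_Ico_eq_sub _ hN]
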